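/- arXiv:1512.02493 — 2 statements merged into one kernel-verified Lean document; each statement's English description precedes it below -/
import Mathlib

section
/- The real 2×2 matrix M = [[−1/β₁², β·β₂/β₁²], [β·β₂/β₁², 1/β₁²]] is orthogonal, i.e. Mᵀ·M is the identity matrix. (This is the unitarity of the (b,2)-cell matrix of the biunitary connection κ for the AH+1 subfactor.) -/
open Matrix

/-- β = √((7+√17)/2) -/
noncomputable def β : ℝ := Real.sqrt ((7 + Real.sqrt 17) / 2)

/-- β₁ = √((5+√17)/2) -/
noncomputable def β₁ : ℝ := Real.sqrt ((5 + Real.sqrt 17) / 2)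

/-- β₂ = √((3+√17)/2) -/
noncomputable def β₂ : ℝ := Real.sqrt ((3 + Real.sqrt 17) / 2)

/-- The (b,2)-cell matrix of the biunitary connection κ for AH+1. -/
noncomputable def M : Matrix (Fin 2) (Fin 2) ℝ :=
  !![-1 / β₁ ^ 2, β * β₂ / β₁ ^ 2;
     β * β₂ / β₁ ^ 2, 1 / β₁ ^ 2]

/-! Only `β₁ ^ 2 = β ^ 2 - 1` and `β₂ ^ 2 = β ^ 2 - 2` matter: then
`(β β₂) ^ 2 = β ^ 2 (β ^ 2 - 2) = (β₁ ^ 2) ^ 2 - 1`, so the columns of `M`, which have the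
reflection shape `(-a, b), (b, a)`, are unit vectors. -/

theorem Matrix.transpose_mul_self_of_reflection {R : Type*} [CommRing R] (a b : R) :
    (!![-a, b; b, a])ᵀ * !![-a, b; b, a] = (a ^ 2 + b ^ 2) • (1 : Matrix (Fin 2) (Fin 2) R) := by
  ext i j
  fin_cases i <;> fin_cases j <;> simp [Matrix.mul_apply, Fin.sum_univ_two] <;> ring

theorem two_le_β_sq : 2 ≤ β ^ 2 := by
  have : (0 : ℝ) ≤ Real.sqrt 17 := Real.sqrt_nonneg 17
  rw [β, Real.sq_sqrt (by positivity)]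
  linarith

theorem β₁_sq : β₁ ^ 2 = β ^ 2 - 1 := by
  rw [β, β₁, Real.sq_sqrt (by positivity), Real.sq_sqrt (by positivity)]
  ring

theorem β₂_sq : β₂ ^ 2 = β ^ 2 - 2 := by
  rw [β, β₂, Real.sq_sqrt (by positivity), Real.sq_sqrt (by positivity)]
  ring

theorem β_mul_β₂_sq : (β * β₂) ^ 2 = (β₁ ^ 2) ^ 2 - 1 := by
  rw [mul_pow, β₁_sq, β₂_sq]
  ring

theorem M_eq_reflection : M = !![-(1 / β₁ ^ 2), β * β₂ / β₁ ^ 2; β * β₂ / β₁ ^ 2, 1 / β₁ ^ 2] := by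
  rw [M, neg_div]

/-- The (b,2)-cell matrix of the connection κ for AH+1 is orthogonal. -/
theorem stmt_0 : Mᵀ * M = (1 : Matrix (Fin 2) (Fin 2) ℝ) := by
  have hβ₁ : β₁ ^ 2 ≠ 0 := by
    rw [β₁_sq]
    linarith [two_le_β_sq]
  have unit_row : (1 / β₁ ^ 2) ^ 2 + (β * β₂ / β₁ ^ 2) ^ 2 = 1 := by
    rw [div_pow, div_pow, β_mul_β₂_sq, one_pow, ← add_div, add_sub_cancel,
      div_self (pow_ne_zero 2 hβ₁)]
  rw [M_eq_reflection, Matrix.transpose_mul_self_of_reflection, unit_row, one_smul]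
end

section
/- The vectors u = (β₃/(√2·β), 1/β, β₋₁/(√2·β)) and v₁ = (1/(β·β₂), −β₋₁/(2√2), β₋₁/(2·β₂²)) in ℝ³ are orthogonal; equivalently, β₃/(√2·β²·β₂) − β₋₁/(2√2·β) + β₋₁²/(2√2·β·β₂²) = 0. (This is the orthogonality, at the vertex c, of the embedding of ρ into κκ̄ with the embedding of the identity bimodule 1 into κκ̄ for the AH+1 subfactor, i.e. the compatibility of Tables 1 and 2 of the paper with the decomposition κκ̄ = 1 + ρ.) -/
/-- β₋₁ = √((9+√17)/2) -/
noncomputable def βm1 : ℝ := Real.sqrt ((9 + Real.sqrt 17) / 2)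

/-- β₃ = √((1+√17)/2) -/
noncomputable def β₃ : ℝ := Real.sqrt ((1 + Real.sqrt 17) / 2)

/-! With `t = (1+√17)/2`, a root of `t² = t + 4`, the four numbers are `β₃ = √t`, `β₂ = √(t+1)`,
`β = √(t+3)` and `β₋₁ = √(t+4) = t`; in particular `β₋₁ = β₂² - 1`, and `2 β₂ β₃ = β β₋₁`
because both squares equal `4t(t+1) = (t+3)t²`. Clearing denominators and using the second
relation, the claimed identity becomes `β β₋₁ (1 - β₂² + β₋₁) = 0`, which is the first. -/

theorem orthogonality_identity_of_relations {b b₂ b₃ bm : ℝ} (hb : b ≠ 0) (hb₂ : b₂ ≠ 0)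
    (hbm : bm = b₂ ^ 2 - 1) (hprod : 2 * b₂ * b₃ = b * bm) :
    b₃ / (Real.sqrt 2 * b ^ 2 * b₂) - bm / (2 * Real.sqrt 2 * b)
      + bm ^ 2 / (2 * Real.sqrt 2 * b * b₂ ^ 2) = 0 := by
  have hs : Real.sqrt 2 ≠ 0 := by positivity
  field_simp
  linear_combination hprod + b * bm * hbm

namespace AHPlusOne

lemma sqrt_seventeen_sq : Real.sqrt 17 ^ 2 = 17 := Real.sq_sqrt (by norm_num)

lemma β_pos : 0 < β := Real.sqrt_pos.mpr (by positivity)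

lemma β₂_pos : 0 < β₂ := Real.sqrt_pos.mpr (by positivity)

lemma β_sq : β ^ 2 = (7 + Real.sqrt 17) / 2 := Real.sq_sqrt (by positivity)

lemma βm1_sq : βm1 ^ 2 = (9 + Real.sqrt 17) / 2 := Real.sq_sqrt (by positivity)

lemma β₂_sq : β₂ ^ 2 = (3 + Real.sqrt 17) / 2 := Real.sq_sqrt (by positivity)

lemma β₃_sq : β₃ ^ 2 = (1 + Real.sqrt 17) / 2 := Real.sq_sqrt (by positivity)

lemma βm1_eq : βm1 = (1 + Real.sqrt 17) / 2 := by
  rw [βm1, Real.sqrt_eq_iff_eq_sq (by positivity) (by positivity)]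
  linear_combination (-1 / 4 : ℝ) * sqrt_seventeen_sq

lemma βm1_eq_β₂_sq_sub_one : βm1 = β₂ ^ 2 - 1 := by
  rw [βm1_eq, β₂_sq]
  ring

lemma two_mul_β₂_mul_β₃ : 2 * β₂ * β₃ = β * βm1 := by
  refine (pow_left_inj₀ (by simp only [β₂, β₃]; positivity) (by simp only [β, βm1]; positivity)
    two_ne_zero).mp ?_
  rw [mul_pow, mul_pow, mul_pow, β_sq, βm1_sq, β₂_sq, β₃_sq]
  linear_combination (3 / 4 : ℝ) * sqrt_seventeen_sq

end AHPlusOne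

open AHPlusOne in
/-- The vectors u = (β₃/(√2·β), 1/β, β₋₁/(√2·β)) and v₁ = (1/(β·β₂), −β₋₁/(2√2), β₋₁/(2·β₂²))
are orthogonal: the orthogonality, at the vertex c, of the embedding of ρ into κκ̄ with the
embedding of the identity bimodule 1 into κκ̄ for AH+1. -/
theorem stmt_9 :
    β₃ / (Real.sqrt 2 * β ^ 2 * β₂) - βm1 / (2 * Real.sqrt 2 * β)
      + βm1 ^ 2 / (2 * Real.sqrt 2 * β * β₂ ^ 2) = 0 :=
  orthogonality_identity_of_relations β_pos.ne' β₂_pos.ne' βm1_eq_β₂_sq_sub_one two_mul_β₂_mul_β₃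
end
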